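/- arXiv:2304.08595 — 2 statements merged into one kernel-verified Lean document; each statement's English description precedes it below -/
import Mathlib

section
/- Relaxed greedy packing with read/write dependencies: scan transactions in order and add transaction t to the batch iff for every already-selected transaction t', W(t') ∩ (R(t) ∪ W(t)) = ∅ (the condition W(t) ∩ R(t') = ∅ is not required). Then the resulting batch, in its selection order, satisfies that no earlier transaction's write set intersects a later transaction's read or write set, and therefore (by the earlier determinism lemma) its serial execution equals its pre-execution on the common initial state. -/
structure Tx (Loc V : Type*) where
  R : Finset Loc
  W : Finset Loc
  step : (Loc → V) → (Loc → V)
  writes_only : ∀ s l, l ∉ W → step s l = s l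
  reads_only : ∀ s s', (∀ l ∈ R, s l = s' l) → ∀ l ∈ W, step s l = step s' l

def exec {Loc V : Type*} (s₀ : Loc → V) (ts : List (Tx Loc V)) : Loc → V :=
  ts.foldl (fun s t => t.step s) s₀

variable {Loc V : Type*} [DecidableEq Loc]

/-- Relaxed greedy packing: add `t` iff the accumulated union of write sets of
already-selected transactions is disjoint from `R(t) ∪ W(t)`. -/
def greedyRW (ts : List (Tx Loc V)) : List (Tx Loc V) × Finset Loc :=
  ts.foldl
    (fun st t =>
      if Disjoint st.2 (t.R ∪ t.W) then (st.1 ++ [t], st.2 ∪ t.W) else st)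
    ([], ∅)

lemma exec_unchanged (l : List (Tx Loc V)) (loc : Loc)
    (h : ∀ b ∈ l, loc ∉ b.W) : ∀ s : Loc → V, exec s l loc = s loc := by
  induction l with
  | nil => intro s; rfl
  | cons a rest ih =>
    intro s
    have : exec s (a :: rest) = exec (a.step s) rest := rfl
    rw [this, ih (fun b hb => h b (List.mem_cons_of_mem _ hb)),
      a.writes_only s loc (h a List.mem_cons_self)]

lemma exec_det (l : List (Tx Loc V))
    (hp : l.Pairwise (fun a b => Disjoint a.W (b.R ∪ b.W))) :
    ∀ s₀ : Loc → V, ∀ t ∈ l, ∀ loc ∈ t.W, exec s₀ l loc = t.step s₀ loc := by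
  induction l with
  | nil => intro s₀ t ht; cases ht
  | cons a rest ih =>
    intro s₀ t ht loc hloc
    rw [List.pairwise_cons] at hp
    have hexec : exec s₀ (a :: rest) = exec (a.step s₀) rest := rfl
    rcases List.mem_cons.mp ht with rfl | ht'
    · rw [hexec]
      refine (exec_unchanged rest loc ?_ _)
      intro b hb
      have := hp.1 b hb
      exact fun hw => (Finset.disjoint_left.mp this hloc) (Finset.mem_union_right _ hw)
    · rw [hexec, ih hp.2 (a.step s₀) t ht' loc hloc]
      refine t.reads_only _ _ ?_ loc hloc
      intro l hl
      refine a.writes_only s₀ l ?_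
      have := hp.1 t ht'
      exact fun hw => (Finset.disjoint_left.mp this hw) (Finset.mem_union_left _ hl)

lemma greedy_inv (ts : List (Tx Loc V)) :
    ∀ (acc : List (Tx Loc V)) (ws : Finset Loc),
      acc.Pairwise (fun a b => Disjoint a.W (b.R ∪ b.W)) →
      (∀ t ∈ acc, t.W ⊆ ws) →
      (ts.foldl
        (fun st t =>
          if Disjoint st.2 (t.R ∪ t.W) then (st.1 ++ [t], st.2 ∪ t.W) else st)
        (acc, ws)).1.Pairwise (fun a b => Disjoint a.W (b.R ∪ b.W)) ∧
      (∀ t ∈ (ts.foldl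
        (fun st t =>
          if Disjoint st.2 (t.R ∪ t.W) then (st.1 ++ [t], st.2 ∪ t.W) else st)
        (acc, ws)).1, t.W ⊆ (ts.foldl
        (fun st t =>
          if Disjoint st.2 (t.R ∪ t.W) then (st.1 ++ [t], st.2 ∪ t.W) else st)
        (acc, ws)).2) := by
  induction ts with
  | nil => intro acc ws h1 h2; exact ⟨h1, h2⟩
  | cons t ts ih =>
    intro acc ws h1 h2
    simp only [List.foldl_cons]
    by_cases hd : Disjoint ws (t.R ∪ t.W)
    · rw [if_pos hd]
      refine ih _ _ ?_ ?_
      · rw [List.pairwise_append]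
        refine ⟨h1, List.pairwise_singleton _ _, ?_⟩
        intro a ha b hb
        rw [List.mem_singleton] at hb; subst hb
        exact Disjoint.mono_left (h2 a ha) hd
      · intro u hu
        rcases List.mem_append.mp hu with h | h
        · exact (h2 u h).trans Finset.subset_union_left
        · rw [List.mem_singleton] at h; subst h
          exact Finset.subset_union_right
    · rw [if_neg hd]; exact ih _ _ h1 h2

/-- The relaxed greedy batch, in selection order, has no earlier write set
intersecting a later read or write set; consequently its serial execution
agrees with the pre-execution of each transaction on the common initial state
(each transaction writes from `s₀` exactly what serial execution writes). -/
theorem greedyRW_sound (ts : List (Tx Loc V)) (s₀ : Loc → V) :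
    ((greedyRW ts).1).Pairwise (fun a b => Disjoint a.W (b.R ∪ b.W)) ∧
    (∀ t ∈ (greedyRW ts).1, ∀ loc ∈ t.W,
      exec s₀ (greedyRW ts).1 loc = t.step s₀ loc) := by
  have h := greedy_inv ts [] ∅ (List.Pairwise.nil) (by simp)
  exact ⟨h.1, exec_det _ h.1 s₀⟩
end

section
/- Any batch of transactions selected so that only read-after-read and write-after-read dependencies occur admits, for each shard, a serial sub-order (the restriction of the global order to transactions touching that shard) such that executing each shard's sub-order on its local state, using the recorded cross-shard messages, produces the same per-location values as executing the full global order on the global state. -/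
/-- Per-shard execution: only locations homed in shard `sh` are updated, and a
transaction reads remote (non-`sh`) locations from the recorded cross-shard
messages, i.e. from the initial snapshot `s₀`. -/
def localExec {Loc V : Type*} {k : ℕ} [DecidableEq Loc] (home : Loc → Fin k)
    (sh : Fin k) (s₀ : Loc → V) (ts : List (Tx Loc V)) : Loc → V :=
  ts.foldl
    (fun s t => fun loc =>
      if home loc = sh then
        t.step (fun l => if home l = sh then s l else s₀ l) loc
      else s loc)
    s₀

/-- If the global order permits only read-after-read and write-after-read
dependencies, then for each shard, executing the restriction of the order to the
transactions touching that shard on its local state, with cross-shard reads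
supplied by the recorded messages (initial-state values), yields the same
values on the shard's locations as executing the full global order. -/
theorem shard_local_exec_eq {Loc V : Type*} {k : ℕ} [DecidableEq Loc]
    (home : Loc → Fin k) (s₀ : Loc → V) (ts : List (Tx Loc V))
    (h : ts.Pairwise (fun a b => Disjoint a.W (b.R ∪ b.W))) :
    ∀ (sh : Fin k) (loc : Loc), home loc = sh →
      localExec home sh s₀
          (ts.filter (fun t => decide (∃ l ∈ t.R ∪ t.W, home l = sh))) loc
        = exec s₀ ts loc := by
  intro sh loc hloc
  unfold localExec exec
  suffices H : ∀ (ts : List (Tx Loc V)) (s s' : Loc → V),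
      ts.Pairwise (fun a b => Disjoint a.W (b.R ∪ b.W)) →
      (∀ l, home l = sh → s' l = s l) →
      (∀ t ∈ ts, ∀ l ∈ t.R ∪ t.W, s l = s₀ l) →
      (List.foldl
        (fun s t => fun loc =>
          if home loc = sh then
            t.step (fun l => if home l = sh then s l else s₀ l) loc
          else s loc)
        s' (ts.filter (fun t => decide (∃ l ∈ t.R ∪ t.W, home l = sh)))) loc
        = (List.foldl (fun s t => t.step s) s ts) loc by
    exact H ts s₀ s₀ h (fun _ _ => rfl) (fun _ _ _ _ => rfl)
  clear h ts
  intro ts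
  induction ts with
  | nil => intro s s' _ h1 _; simpa using h1 loc hloc
  | cons t ts ih =>
    intro s s' hp h1 h3
    rw [List.pairwise_cons] at hp
    obtain ⟨hd, hp⟩ := hp
    have hread : ∀ l ∈ t.R, (if home l = sh then s' l else s₀ l) = s l := by
      intro l hl
      by_cases hh : home l = sh
      · simp [hh, h1 l hh]
      · simp only [hh, if_false]
        exact (h3 t List.mem_cons_self l (by simp [hl])).symm
    have h3' : ∀ t' ∈ ts, ∀ l ∈ t'.R ∪ t'.W, t.step s l = s₀ l := by
      intro t' ht' l hl
      have hnw : l ∉ t.W := fun hw =>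
        Finset.disjoint_left.mp (hd t' ht') hw hl
      rw [t.writes_only s l hnw]
      exact h3 t' (List.mem_cons_of_mem _ ht') l hl
    by_cases hkeep : ∃ l ∈ t.R ∪ t.W, home l = sh
    · rw [List.filter_cons_of_pos (by simpa using hkeep)]
      simp only [List.foldl_cons]
      apply ih _ _ hp _ h3'
      intro l hl
      simp only [hl, if_true]
      by_cases hw : l ∈ t.W
      · exact t.reads_only _ _ hread l hw
      · rw [t.writes_only _ l hw, t.writes_only _ l hw]
        simp [hl, h1 l hl]
    · rw [List.filter_cons_of_neg (by simpa using hkeep)]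
      simp only [List.foldl_cons]
      apply ih _ _ hp _ h3'
      intro l hl
      have hnw : l ∉ t.W := fun hw => hkeep ⟨l, by simp [hw], hl⟩
      rw [t.writes_only s l hnw]
      exact h1 l hl
end
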